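/- arXiv:1012.0336 — 3 statements merged into one kernel-verified Lean document; each statement's English description precedes it below -/
import Mathlib

section
/- For every t ≥ 0 the integral ∫₀^∞ r / (((r+t)^2+1)^2 · ((r-t)^2+1)) dr is finite, and the iterated integral ∫₀^∞ (∫₀^∞ r / (((r+t)^2+1)^2 ((r-t)^2+1)) dr)^{1/2} dt is finite. -/
/-!
Both claims follow from pointwise bounds on the kernel. Since `r ≤ 1 + r² ≤ (r + t)² + 1`, the
kernel is at most `1 / (1 + r²)`, which is integrable. For `t > 0`, the factorisation
`((r + t)² + 1) ((r - t)² + 1) = (r² - (t² - 1))² + (2t)²` and `(r + t)² + 1 ≥ 1 + t²` bound the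
kernel by `r / ((1 + t²) ((r² - (t² - 1))² + (2t)²))`, whose integral in `r` is an arctangent
and at most `π / (4t (1 + t²))`. The square root of the inner integral is therefore at most
`2 / (√t (1 + t))`, and `∫₀^∞ dt / (√t (1 + t)) = π`.
-/

open MeasureTheory Set Filter Topology Real

lemma lintegral_Ioi_ofReal_deriv_of_nonneg {g g' : ℝ → ℝ} {a l : ℝ}
    (hcont : ContinuousWithinAt g (Ici a) a) (hderiv : ∀ x ∈ Ioi a, HasDerivAt g (g' x) x)
    (g'pos : ∀ x ∈ Ioi a, 0 ≤ g' x) (hg : Tendsto g atTop (𝓝 l)) :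
    ∫⁻ x in Ioi a, ENNReal.ofReal (g' x) = ENNReal.ofReal (l - g a) := by
  rw [← ofReal_integral_eq_lintegral_ofReal
      (integrableOn_Ioi_deriv_of_nonneg hcont hderiv g'pos hg)
      ((ae_restrict_iff' measurableSet_Ioi).2 (.of_forall g'pos)),
    integral_Ioi_of_hasDerivAt_of_nonneg hcont hderiv g'pos hg]

lemma lintegral_Ioi_div_sq_sub_add_sq_le (a : ℝ) {b : ℝ} (hb : 0 < b) :
    ∫⁻ r in Ioi 0, ENNReal.ofReal (r / ((r ^ 2 - a) ^ 2 + b ^ 2)) ≤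
      ENNReal.ofReal (π / (2 * b)) := by
  have hderiv (r : ℝ) : HasDerivAt (fun r => arctan ((r ^ 2 - a) / b) / (2 * b))
      (r / ((r ^ 2 - a) ^ 2 + b ^ 2)) r := by
    refine (((hasDerivAt_pow 2 r).sub_const a).div_const b).arctan.div_const (2 * b)
      |>.congr_deriv ?_
    field_simp
    ring
  have hlim : Tendsto (fun r => arctan ((r ^ 2 - a) / b) / (2 * b)) atTop
      (𝓝 (π / 2 / (2 * b))) :=
    ((tendsto_nhds_of_tendsto_nhdsWithin tendsto_arctan_atTop).comp <|
      (tendsto_atTop_add_const_right _ (-a) (tendsto_pow_atTop two_ne_zero)).atTop_div_const hb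
      ).div_const _
  rw [lintegral_Ioi_ofReal_deriv_of_nonneg (hderiv 0).continuousAt.continuousWithinAt
    (fun r _ => hderiv r) (fun r hr => by have := mem_Ioi.1 hr; positivity) hlim]
  refine ENNReal.ofReal_le_ofReal ?_
  rw [← sub_div]
  gcongr
  linarith [neg_pi_div_two_lt_arctan ((0 ^ 2 - a) / b)]

lemma lintegral_Ioi_inv_sqrt_mul_one_add :
    ∫⁻ t in Ioi 0, ENNReal.ofReal (√t * (1 + t))⁻¹ = ENNReal.ofReal π := by
  have hderiv (t : ℝ) (ht : 0 < t) :
      HasDerivAt (fun t => 2 * arctan √t) (√t * (1 + t))⁻¹ t := by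
    refine (((hasDerivAt_sqrt ht.ne').arctan).const_mul 2).congr_deriv ?_
    rw [sq_sqrt ht.le]
    field_simp
  have hlim : Tendsto (fun t => 2 * arctan √t) atTop (𝓝 (2 * (π / 2))) :=
    ((tendsto_nhds_of_tendsto_nhdsWithin tendsto_arctan_atTop).comp tendsto_sqrt_atTop).const_mul 2
  rw [lintegral_Ioi_ofReal_deriv_of_nonneg (by fun_prop) hderiv
    (fun t ht => by have := mem_Ioi.1 ht; positivity) hlim,
    sqrt_zero, arctan_zero, mul_zero, sub_zero, mul_div_cancel₀ _ two_ne_zero]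

noncomputable def kernel (t r : ℝ) : ℝ :=
  r / (((r + t) ^ 2 + 1) ^ 2 * ((r - t) ^ 2 + 1))

lemma kernel_le_inv_one_add_sq {t r : ℝ} (ht : 0 ≤ t) (hr : 0 ≤ r) :
    kernel t r ≤ (1 + r ^ 2)⁻¹ := by
  have hP : 1 + r ^ 2 ≤ (r + t) ^ 2 + 1 := by nlinarith
  calc kernel t r ≤ r / (1 + r ^ 2) ^ 2 :=
        div_le_div_of_nonneg_left hr (by positivity) <|
          (pow_le_pow_left₀ (by positivity) hP 2).trans
            (le_mul_of_one_le_right (by positivity) (by nlinarith))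
    _ ≤ (1 + r ^ 2) / (1 + r ^ 2) ^ 2 := by gcongr; nlinarith [sq_nonneg (r - 1)]
    _ = (1 + r ^ 2)⁻¹ := by rw [sq (1 + r ^ 2), div_mul_cancel_left₀ (by positivity)]

lemma kernel_le_of_pos {t r : ℝ} (ht : 0 < t) (hr : 0 ≤ r) :
    kernel t r ≤ (1 + t ^ 2)⁻¹ * (r / ((r ^ 2 - (t ^ 2 - 1)) ^ 2 + (2 * t) ^ 2)) := by
  have hfactor :
      ((r + t) ^ 2 + 1) * ((r - t) ^ 2 + 1) = (r ^ 2 - (t ^ 2 - 1)) ^ 2 + (2 * t) ^ 2 := by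
    ring
  calc kernel t r = r / (((r + t) ^ 2 + 1) * ((r ^ 2 - (t ^ 2 - 1)) ^ 2 + (2 * t) ^ 2)) := by
        rw [kernel, ← hfactor]; ring
    _ ≤ r / ((1 + t ^ 2) * ((r ^ 2 - (t ^ 2 - 1)) ^ 2 + (2 * t) ^ 2)) := by
        refine div_le_div_of_nonneg_left hr (by positivity) ?_
        exact mul_le_mul_of_nonneg_right (by nlinarith) (by positivity)
    _ = _ := by rw [inv_mul_eq_div, div_div, mul_comm]

lemma lintegral_kernel_lt_top {t : ℝ} (ht : 0 ≤ t) :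
    ∫⁻ r in Ioi 0, ENNReal.ofReal (kernel t r) < ⊤ :=
  (setLIntegral_mono' measurableSet_Ioi fun _ hr =>
    ENNReal.ofReal_le_ofReal (kernel_le_inv_one_add_sq ht (le_of_lt hr))).trans_lt
    integrable_inv_one_add_sq.integrableOn.setLIntegral_lt_top

lemma lintegral_kernel_le {t : ℝ} (ht : 0 < t) :
    ∫⁻ r in Ioi 0, ENNReal.ofReal (kernel t r) ≤
      ENNReal.ofReal (π / (4 * t * (1 + t ^ 2))) :=
  calc ∫⁻ r in Ioi 0, ENNReal.ofReal (kernel t r)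
      ≤ ∫⁻ r in Ioi 0, ENNReal.ofReal (1 + t ^ 2)⁻¹ *
          ENNReal.ofReal (r / ((r ^ 2 - (t ^ 2 - 1)) ^ 2 + (2 * t) ^ 2)) :=
        setLIntegral_mono' measurableSet_Ioi fun r hr => by
          rw [← ENNReal.ofReal_mul (by positivity)]
          exact ENNReal.ofReal_le_ofReal (kernel_le_of_pos ht (le_of_lt hr))
    _ ≤ ENNReal.ofReal (1 + t ^ 2)⁻¹ * ENNReal.ofReal (π / (2 * (2 * t))) := by
        rw [lintegral_const_mul' _ _ ENNReal.ofReal_ne_top]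
        gcongr
        exact lintegral_Ioi_div_sq_sub_add_sq_le _ (by positivity)
    _ = ENNReal.ofReal (π / (4 * t * (1 + t ^ 2))) := by
        rw [← ENNReal.ofReal_mul (by positivity)]
        congr 1
        field_simp
        ring

lemma sqrt_lintegral_kernel_le {t : ℝ} (ht : 0 < t) :
    √(∫⁻ r in Ioi 0, ENNReal.ofReal (kernel t r)).toReal ≤ 2 * (√t * (1 + t))⁻¹ := by
  have hsq : (2 * (√t * (1 + t))⁻¹) ^ 2 = 4 / (t * (1 + t) ^ 2) := by
    rw [mul_pow, inv_pow, mul_pow, sq_sqrt ht.le]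
    ring
  rw [sqrt_le_left (by positivity), hsq]
  calc _ ≤ π / (4 * t * (1 + t ^ 2)) :=
        ENNReal.toReal_le_of_le_ofReal (by positivity) (lintegral_kernel_le ht)
    _ ≤ 4 / (t * (1 + t) ^ 2) := by
        rw [div_le_div_iff₀ (by positivity) (by positivity)]
        have : t * (1 + t) ^ 2 ≤ 2 * (t * (1 + t ^ 2)) := by nlinarith [sq_nonneg (1 - t)]
        nlinarith [pi_le_four, pi_pos]

theorem stmt_2 :
    (∀ t : ℝ, 0 ≤ t →
      (∫⁻ r in Set.Ioi (0 : ℝ),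
        ENNReal.ofReal (r / (((r + t) ^ 2 + 1) ^ 2 * ((r - t) ^ 2 + 1)))) < ⊤) ∧
    (∫⁻ t in Set.Ioi (0 : ℝ),
      ENNReal.ofReal (Real.sqrt
        ((∫⁻ r in Set.Ioi (0 : ℝ),
          ENNReal.ofReal (r / (((r + t) ^ 2 + 1) ^ 2 * ((r - t) ^ 2 + 1)))).toReal))) < ⊤ := by
  refine ⟨fun t ht => lintegral_kernel_lt_top ht, ?_⟩
  calc _ ≤ ∫⁻ t in Ioi 0, 2 * ENNReal.ofReal (√t * (1 + t))⁻¹ :=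
        setLIntegral_mono' measurableSet_Ioi fun t ht => by
          rw [← ENNReal.ofReal_ofNat 2, ← ENNReal.ofReal_mul zero_le_two]
          exact ENNReal.ofReal_le_ofReal (sqrt_lintegral_kernel_le ht)
    _ = 2 * ENNReal.ofReal π := by
        rw [lintegral_const_mul' _ _ ENNReal.ofNat_ne_top, lintegral_Ioi_inv_sqrt_mul_one_add]
    _ < ⊤ := by finiteness
end

section
/- The integral ∫₀^∞ (t^2+1)^{-3/4} · (∫₀^∞ r / (√(r^2+1) · ((r-t)^2+1)) dr)^{1/2} dt is finite. -/
/-!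
Since `r ≤ √(r ^ 2 + 1)`, the inner integral is at most `∫ ((r - t) ^ 2 + 1)⁻¹ dr = π` for every `t`,
so the integrand is at most `√π (t ^ 2 + 1) ^ (-3/4)`, which is integrable because `3/2 > 1`.
-/

open MeasureTheory Real

lemma le_sqrt_sq_add_one (r : ℝ) : r ≤ √(r ^ 2 + 1) :=
  (le_abs_self r).trans (Real.abs_le_sqrt (by linarith))

lemma div_sqrt_sq_add_one_mul_le {q : ℝ} (hq : 0 < q) (r : ℝ) :
    r / (√(r ^ 2 + 1) * q) ≤ q⁻¹ := by
  have hsqrt : 0 < √(r ^ 2 + 1) := Real.sqrt_pos.2 (by positivity)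
  rw [← div_div, div_le_iff₀ hq, inv_mul_cancel₀ hq.ne']
  exact (div_le_one hsqrt).2 (le_sqrt_sq_add_one r)

lemma lintegral_inv_sub_sq_add_one (t : ℝ) :
    ∫⁻ r, ENNReal.ofReal (((r - t) ^ 2 + 1)⁻¹) = ENNReal.ofReal π := by
  simp_rw [add_comm _ (1 : ℝ)]
  rw [← ofReal_integral_eq_lintegral_ofReal (integrable_inv_one_add_sq.comp_sub_right t)
      (.of_forall fun r => by positivity),
    integral_sub_right_eq_self (fun x : ℝ => (1 + x ^ 2)⁻¹) t, integral_univ_inv_one_add_sq]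

lemma setLIntegral_Ioi_div_sqrt_mul_le_pi (t : ℝ) :
    ∫⁻ r in Set.Ioi (0 : ℝ), ENNReal.ofReal (r / (√(r ^ 2 + 1) * ((r - t) ^ 2 + 1)))
      ≤ ENNReal.ofReal π :=
  calc ∫⁻ r in Set.Ioi (0 : ℝ), ENNReal.ofReal (r / (√(r ^ 2 + 1) * ((r - t) ^ 2 + 1)))
      ≤ ∫⁻ r in Set.Ioi (0 : ℝ), ENNReal.ofReal (((r - t) ^ 2 + 1)⁻¹) :=
        lintegral_mono fun r => ENNReal.ofReal_le_ofReal <|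
          div_sqrt_sq_add_one_mul_le (by positivity) r
    _ ≤ ∫⁻ r, ENNReal.ofReal (((r - t) ^ 2 + 1)⁻¹) := setLIntegral_le_lintegral _ _
    _ = ENNReal.ofReal π := lintegral_inv_sub_sq_add_one t

lemma integrable_sq_add_one_rpow_neg {s : ℝ} (hs : 1 / 2 < s) :
    Integrable fun t : ℝ => (t ^ 2 + 1) ^ (-s) := by
  have h := integrable_rpow_neg_one_add_norm_sq (E := ℝ) (μ := volume) (r := 2 * s)
    (by rw [Module.finrank_self]; push_cast; linarith)
  refine h.congr (.of_forall fun t => ?_)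
  simp only [Real.norm_eq_abs, sq_abs]
  rw [add_comm]
  ring_nf

theorem stmt_3 :
    (∫⁻ t in Set.Ioi (0 : ℝ),
      ENNReal.ofReal ((t ^ 2 + 1) ^ (-(3 : ℝ) / 4) *
        Real.sqrt ((∫⁻ r in Set.Ioi (0 : ℝ),
          ENNReal.ofReal (r / (Real.sqrt (r ^ 2 + 1) * ((r - t) ^ 2 + 1)))).toReal))) < ⊤ := by
  have hinner (t : ℝ) :
      (∫⁻ r in Set.Ioi (0 : ℝ),
        ENNReal.ofReal (r / (√(r ^ 2 + 1) * ((r - t) ^ 2 + 1)))).toReal ≤ π :=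
    ENNReal.toReal_le_of_le_ofReal pi_pos.le (setLIntegral_Ioi_div_sqrt_mul_le_pi t)
  have hmajorant : IntegrableOn (fun t : ℝ => (t ^ 2 + 1) ^ (-(3 : ℝ) / 4) * √π) (Set.Ioi 0) := by
    rw [neg_div]
    exact ((integrable_sq_add_one_rpow_neg (by norm_num)).mul_const _).integrableOn
  refine lt_of_le_of_lt (lintegral_mono fun t => ENNReal.ofReal_le_ofReal ?_)
    hmajorant.lintegral_lt_top
  gcongr
  exact hinner t
end

section
/- Suppose u, v : ℝ² → ℝ (functions of (r,t) with r,t ≥ 0) satisfy |u(r,t)| ≤ c/(((t+r)^2+1)^{1/4} √((t-r)^2+1)) and |v(r,t)| ≤ c/(((t+r)^2+1)^{3/4}) for some c > 0. Then ∫₀^∞ (∫₀^∞ |u(r,t)|² |v(r,t)|² r dr)^{1/2} dt ≤ c² ∫₀^∞ (∫₀^∞ r /(((r+t)^2+1)^2 ((r-t)^2+1)) dr)^{1/2} dt < ∞. -/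
/-!
Pointwise, `u² v² r ≤ c⁴ r / (((r + t)² + 1)² ((r - t)² + 1))`, which gives the inequality by
monotonicity of the integrals once the inner kernel integral is known to be finite (otherwise
its `toReal` would be `0`). For the kernel, `r ≤ √((r + t)² + 1)` and `t² + 1 ≤ (r + t)² + 1`
bound it by `(1 + t²)^(-3/2) / (1 + (r - t)²)`, whose `r`-integral is at most `π (1 + t²)^(-3/2)`.
So the outer integrand is at most `√π (1 + t²)^(-3/4)`, which is integrable on `ℝ`.
-/

open MeasureTheory Set Real
open scoped ENNReal

lemma ofReal_sqrt_toReal_le_mul {X Y : ℝ≥0∞} {a : ℝ} (ha : 0 ≤ a) (hY : Y ≠ ∞)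
    (h : X ≤ ENNReal.ofReal (a ^ 2) * Y) :
    ENNReal.ofReal √X.toReal ≤ ENNReal.ofReal a * ENNReal.ofReal √Y.toReal := by
  have hX : X.toReal ≤ a ^ 2 * Y.toReal := by
    simpa only [ENNReal.toReal_mul, ENNReal.toReal_ofReal (sq_nonneg a)] using
      ENNReal.toReal_mono (ENNReal.mul_ne_top ENNReal.ofReal_ne_top hY) h
  rw [← ENNReal.ofReal_mul ha]
  refine ENNReal.ofReal_le_ofReal ?_
  calc √X.toReal ≤ √(a ^ 2 * Y.toReal) := Real.sqrt_le_sqrt hX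
    _ = a * √Y.toReal := by rw [Real.sqrt_mul (sq_nonneg a), Real.sqrt_sq ha]

lemma sq_mul_sq_le_of_abs_le {x y c a s : ℝ} (hx : |x| ≤ c / (a * s)) (hy : |y| ≤ c / a ^ 3) :
    x ^ 2 * y ^ 2 ≤ c ^ 4 / ((a ^ 4) ^ 2 * s ^ 2) := by
  have h := mul_le_mul hx hy (abs_nonneg y) ((abs_nonneg x).trans hx)
  rw [← abs_mul] at h
  calc x ^ 2 * y ^ 2 = |x * y| ^ 2 := by rw [sq_abs]; ring
    _ ≤ (c / (a * s) * (c / a ^ 3)) ^ 2 := pow_le_pow_left₀ (abs_nonneg _) h 2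
    _ = c ^ 4 / ((a ^ 4) ^ 2 * s ^ 2) := by ring

lemma sq_mul_sq_mul_le_radial_kernel {x y c r t : ℝ} (hr : 0 ≤ r)
    (hx : |x| ≤ c / (((t + r) ^ 2 + 1) ^ ((1 : ℝ) / 4) * √((t - r) ^ 2 + 1)))
    (hy : |y| ≤ c / ((t + r) ^ 2 + 1) ^ ((3 : ℝ) / 4)) :
    x ^ 2 * y ^ 2 * r ≤ (c ^ 2) ^ 2 * (r / (((r + t) ^ 2 + 1) ^ 2 * ((r - t) ^ 2 + 1))) := by
  set A := (t + r) ^ 2 + 1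
  have hA : 0 ≤ A := by positivity
  have hquarter (n : ℕ) : (A ^ ((1 : ℝ) / 4)) ^ n = A ^ ((n : ℝ) / 4) := by
    rw [← rpow_natCast, ← rpow_mul hA]; ring_nf
  have hy' : |y| ≤ c / (A ^ ((1 : ℝ) / 4)) ^ 3 := by rw [hquarter]; exact_mod_cast hy
  have h := sq_mul_sq_le_of_abs_le hx hy'
  rw [hquarter, Nat.cast_ofNat, div_self four_ne_zero, rpow_one,
    Real.sq_sqrt (by positivity)] at h
  calc x ^ 2 * y ^ 2 * r ≤ c ^ 4 / (A ^ 2 * ((t - r) ^ 2 + 1)) * r :=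
        mul_le_mul_of_nonneg_right h hr
    _ = (c ^ 2) ^ 2 * (r / (((r + t) ^ 2 + 1) ^ 2 * ((r - t) ^ 2 + 1))) := by ring

lemma radial_kernel_le {r t : ℝ} (hr : 0 ≤ r) (ht : 0 ≤ t) :
    r / (((r + t) ^ 2 + 1) ^ 2 * ((r - t) ^ 2 + 1)) ≤
      ((1 + t ^ 2) ^ (-(3 / 4 : ℝ))) ^ 2 * (1 + (r - t) ^ 2)⁻¹ := by
  set A := (r + t) ^ 2 + 1
  have hA : 0 < A := by positivity
  have hrA : r ≤ √A := Real.le_sqrt_of_sq_le (by nlinarith)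
  have htA : √(1 + t ^ 2) ≤ √A := Real.sqrt_le_sqrt (by nlinarith)
  have hnum : r * √(1 + t ^ 2) ^ 3 ≤ A ^ 2 :=
    calc r * √(1 + t ^ 2) ^ 3 ≤ √A * √A ^ 3 := by gcongr
      _ = A ^ 2 := by rw [← pow_succ', show 3 + 1 = 2 * 2 from rfl, pow_mul, Real.sq_sqrt hA.le]
  have hweight : ((1 + t ^ 2) ^ (-(3 / 4 : ℝ))) ^ 2 = (√(1 + t ^ 2) ^ 3)⁻¹ := by
    have h0 : 0 ≤ 1 + t ^ 2 := by positivity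
    rw [← rpow_natCast (_ ^ _) 2, ← rpow_mul h0, Real.sqrt_eq_rpow, ← rpow_natCast (_ ^ _) 3,
      ← rpow_mul h0, ← rpow_neg h0]
    norm_num
  rw [hweight, ← mul_inv, ← one_div, show (r - t) ^ 2 + 1 = 1 + (r - t) ^ 2 by ring,
    div_le_div_iff₀ (by positivity) (by positivity)]
  nlinarith [mul_le_mul_of_nonneg_right hnum (by positivity : 0 ≤ 1 + (r - t) ^ 2)]

lemma lintegral_inv_one_add_sq_sub_le (s : Set ℝ) (t : ℝ) :
    ∫⁻ r in s, ENNReal.ofReal (1 + (r - t) ^ 2)⁻¹ ≤ ENNReal.ofReal π := by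
  have hint : Integrable fun r : ℝ => (1 + (r - t) ^ 2)⁻¹ :=
    integrable_inv_one_add_sq.comp_sub_right t
  calc ∫⁻ r in s, ENNReal.ofReal (1 + (r - t) ^ 2)⁻¹
      ≤ ∫⁻ r, ENNReal.ofReal (1 + (r - t) ^ 2)⁻¹ := setLIntegral_le_lintegral _ _
    _ = ENNReal.ofReal (∫ r, (1 + (r - t) ^ 2)⁻¹) :=
        (ofReal_integral_eq_lintegral_ofReal hint (ae_of_all _ fun r => by positivity)).symm
    _ = ENNReal.ofReal π := by
        rw [integral_sub_right_eq_self (fun r => (1 + r ^ 2)⁻¹) t, integral_univ_inv_one_add_sq]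

lemma lintegral_radial_kernel_le {t : ℝ} (ht : 0 ≤ t) :
    ∫⁻ r in Ioi (0 : ℝ), ENNReal.ofReal (r / (((r + t) ^ 2 + 1) ^ 2 * ((r - t) ^ 2 + 1))) ≤
      ENNReal.ofReal (((1 + t ^ 2) ^ (-(3 / 4 : ℝ))) ^ 2) * ENNReal.ofReal π :=
  calc ∫⁻ r in Ioi (0 : ℝ), ENNReal.ofReal (r / (((r + t) ^ 2 + 1) ^ 2 * ((r - t) ^ 2 + 1)))
      ≤ ∫⁻ r in Ioi (0 : ℝ), ENNReal.ofReal (((1 + t ^ 2) ^ (-(3 / 4 : ℝ))) ^ 2) *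
          ENNReal.ofReal (1 + (r - t) ^ 2)⁻¹ :=
        setLIntegral_mono' measurableSet_Ioi fun r hr => by
          rw [← ENNReal.ofReal_mul (by positivity)]
          exact ENNReal.ofReal_le_ofReal (radial_kernel_le (le_of_lt hr) ht)
    _ = ENNReal.ofReal (((1 + t ^ 2) ^ (-(3 / 4 : ℝ))) ^ 2) *
          ∫⁻ r in Ioi (0 : ℝ), ENNReal.ofReal (1 + (r - t) ^ 2)⁻¹ :=
        lintegral_const_mul' _ _ ENNReal.ofReal_ne_top
    _ ≤ ENNReal.ofReal (((1 + t ^ 2) ^ (-(3 / 4 : ℝ))) ^ 2) * ENNReal.ofReal π := by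
        gcongr
        exact lintegral_inv_one_add_sq_sub_le _ t

lemma lintegral_rpow_neg_three_quarters_lt_top :
    ∫⁻ t in Ioi (0 : ℝ), ENNReal.ofReal ((1 + t ^ 2) ^ (-(3 / 4 : ℝ)) * √π) < ⊤ := by
  have h := integrable_rpow_neg_one_add_norm_sq (E := ℝ) (μ := volume) (r := 3 / 2) (by norm_num)
  simp only [Real.norm_eq_abs, sq_abs] at h
  rw [show -(3 / 2 : ℝ) / 2 = -(3 / 4) by norm_num] at h
  exact (h.mul_const √π).integrableOn.lintegral_lt_top

theorem stmt_14_general (u v : ℝ → ℝ → ℝ) (c : ℝ)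
    (hu : ∀ r t : ℝ, 0 ≤ r → 0 ≤ t →
      |u r t| ≤ c / (((t + r) ^ 2 + 1) ^ ((1 : ℝ) / 4) * Real.sqrt ((t - r) ^ 2 + 1)))
    (hv : ∀ r t : ℝ, 0 ≤ r → 0 ≤ t →
      |v r t| ≤ c / ((t + r) ^ 2 + 1) ^ ((3 : ℝ) / 4)) :
    (∫⁻ t in Set.Ioi (0 : ℝ),
        ENNReal.ofReal (Real.sqrt
          ((∫⁻ r in Set.Ioi (0 : ℝ),
            ENNReal.ofReal ((u r t) ^ 2 * (v r t) ^ 2 * r)).toReal))) ≤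
      ENNReal.ofReal (c ^ 2) *
        (∫⁻ t in Set.Ioi (0 : ℝ),
          ENNReal.ofReal (Real.sqrt
            ((∫⁻ r in Set.Ioi (0 : ℝ),
              ENNReal.ofReal (r / (((r + t) ^ 2 + 1) ^ 2 * ((r - t) ^ 2 + 1)))).toReal))) ∧
    (∫⁻ t in Set.Ioi (0 : ℝ),
        ENNReal.ofReal (Real.sqrt
          ((∫⁻ r in Set.Ioi (0 : ℝ),
            ENNReal.ofReal (r / (((r + t) ^ 2 + 1) ^ 2 * ((r - t) ^ 2 + 1)))).toReal))) < ⊤ := by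
  have hkernel_ne_top (t : ℝ) (ht : t ∈ Ioi 0) :
      ∫⁻ r in Ioi (0 : ℝ), ENNReal.ofReal (r / (((r + t) ^ 2 + 1) ^ 2 * ((r - t) ^ 2 + 1))) ≠ ⊤ :=
    ne_top_of_le_ne_top (by finiteness) (lintegral_radial_kernel_le ht.out.le)
  have huv (t : ℝ) (ht : t ∈ Ioi 0) :
      ∫⁻ r in Ioi (0 : ℝ), ENNReal.ofReal ((u r t) ^ 2 * (v r t) ^ 2 * r) ≤
        ENNReal.ofReal ((c ^ 2) ^ 2) *
          ∫⁻ r in Ioi (0 : ℝ), ENNReal.ofReal (r / (((r + t) ^ 2 + 1) ^ 2 * ((r - t) ^ 2 + 1))) := by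
    rw [← lintegral_const_mul' _ _ ENNReal.ofReal_ne_top]
    refine setLIntegral_mono' measurableSet_Ioi fun r hr => ?_
    rw [← ENNReal.ofReal_mul (by positivity)]
    exact ENNReal.ofReal_le_ofReal
      (sq_mul_sq_mul_le_radial_kernel hr.out.le (hu r t hr.out.le ht.out.le) (hv r t hr.out.le ht.out.le))
  refine ⟨?_, ?_⟩
  · rw [← lintegral_const_mul' _ _ ENNReal.ofReal_ne_top]
    exact setLIntegral_mono' measurableSet_Ioi fun t ht =>
      ofReal_sqrt_toReal_le_mul (sq_nonneg c) (hkernel_ne_top t ht) (huv t ht)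
  · refine lt_of_le_of_lt (setLIntegral_mono' measurableSet_Ioi fun t ht => ?_)
      lintegral_rpow_neg_three_quarters_lt_top
    rw [ENNReal.ofReal_mul (by positivity)]
    simpa only [ENNReal.toReal_ofReal pi_pos.le] using
      ofReal_sqrt_toReal_le_mul (by positivity) ENNReal.ofReal_ne_top
        (lintegral_radial_kernel_le ht.out.le)

theorem stmt_14 (u v : ℝ → ℝ → ℝ) (c : ℝ) (hc : 0 < c)
    (hu : ∀ r t : ℝ, 0 ≤ r → 0 ≤ t →
      |u r t| ≤ c / (((t + r) ^ 2 + 1) ^ ((1 : ℝ) / 4) * Real.sqrt ((t - r) ^ 2 + 1)))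
    (hv : ∀ r t : ℝ, 0 ≤ r → 0 ≤ t →
      |v r t| ≤ c / ((t + r) ^ 2 + 1) ^ ((3 : ℝ) / 4)) :
    (∫⁻ t in Set.Ioi (0 : ℝ),
        ENNReal.ofReal (Real.sqrt
          ((∫⁻ r in Set.Ioi (0 : ℝ),
            ENNReal.ofReal ((u r t) ^ 2 * (v r t) ^ 2 * r)).toReal))) ≤
      ENNReal.ofReal (c ^ 2) *
        (∫⁻ t in Set.Ioi (0 : ℝ),
          ENNReal.ofReal (Real.sqrt
            ((∫⁻ r in Set.Ioi (0 : ℝ),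
              ENNReal.ofReal (r / (((r + t) ^ 2 + 1) ^ 2 * ((r - t) ^ 2 + 1)))).toReal))) ∧
    (∫⁻ t in Set.Ioi (0 : ℝ),
        ENNReal.ofReal (Real.sqrt
          ((∫⁻ r in Set.Ioi (0 : ℝ),
            ENNReal.ofReal (r / (((r + t) ^ 2 + 1) ^ 2 * ((r - t) ^ 2 + 1)))).toReal))) < ⊤ :=
  stmt_14_general u v c hu hv
end
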